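/- Let X and Y be independent random variables, each uniformly distributed on a 3-element alphabet, and let Z = 1 if X = Y and Z = 0 otherwise. Let M be any finite-valued random variable on the same probability space with I(X ; Y | M) = 0, H(Z | (M, X)) = 0 and H(Z | (M, Y)) = 0. Then I(X ; M | Y) + I(Y ; M | X) ≥ 2 log 3 − (2/3) log 2. -/

import Mathlib

open MeasureTheory ProbabilityTheory Real
open scoped ENNReal

/-- The probability that the random variable `X` takes the value `x`. -/
noncomputable def pm {Ω S : Type*} [MeasurableSpace Ω] (μ : Measure Ω) (X : Ω → S) (x : S) : ℝ :=
  (μ (X ⁻¹' {x})).toReal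

/-- Shannon entropy (with natural logarithm) of a finite-valued random variable. -/
noncomputable def entH {Ω S : Type*} [MeasurableSpace Ω] [Fintype S]
    (μ : Measure Ω) (X : Ω → S) : ℝ :=
  ∑ x : S, Real.negMulLog (pm μ X x)

/-- Conditional entropy `H(X | Y)`. -/
noncomputable def condEnt {Ω S T : Type*} [MeasurableSpace Ω] [Fintype S] [Fintype T]
    (μ : Measure Ω) (X : Ω → S) (Y : Ω → T) : ℝ :=
  entH μ (fun ω => (X ω, Y ω)) - entH μ Y

/-- Mutual information `I(X ; Y)`. -/
noncomputable def mutInf {Ω S T : Type*} [MeasurableSpace Ω] [Fintype S] [Fintype T]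
    (μ : Measure Ω) (X : Ω → S) (Y : Ω → T) : ℝ :=
  entH μ X + entH μ Y - entH μ (fun ω => (X ω, Y ω))

/-- Conditional mutual information `I(X ; Y | Z)`. -/
noncomputable def condMutInf {Ω S T U : Type*} [MeasurableSpace Ω] [Fintype S] [Fintype T]
    [Fintype U] (μ : Measure Ω) (X : Ω → S) (Y : Ω → T) (Z : Ω → U) : ℝ :=
  entH μ (fun ω => (X ω, Z ω)) + entH μ (fun ω => (Y ω, Z ω))
    - entH μ (fun ω => ((X ω, Y ω), Z ω)) - entH μ Z

/-!
Expanding the definitions, `I(X;M|Y) + I(Y;M|X) = 2 H(X,Y) - H(X) - H(Y) - H(X|M) - H(Y|M)`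
once `I(X;Y|M) = 0`, so for uniform independent inputs it suffices to show
`H(X|M) + H(Y|M) ≤ log 2 * P(X ≠ Y) = (2/3) log 2`. Given `M = t`, the inputs are independent
(equality in Gibbs' inequality) with laws `r` and `s`, and since `Z` is a function of `(M, X)` and
of `(M, Y)`, `s` takes only the values `0, 1` on the support of `r`, and vice versa. So either
`r = s` is a point mass, or the supports of `r` and `s` are disjoint; in a 3-letter alphabet one of
them is then a point mass and the other has at most two atoms, so `H(r) + H(s) ≤ log 2`.
-/

open Finset

namespace Real

lemma negMulLog_add_mul_log_eq {a b : ℝ} (hb : b ≠ 0) :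
    negMulLog a + a * log b = b * negMulLog (a / b) := by
  have h := negMulLog_mul b (a / b)
  rw [mul_div_cancel₀ a hb] at h
  rw [h, negMulLog]
  field_simp
  ring

lemma negMulLog_add_mul_log_le {a b : ℝ} (ha : 0 ≤ a) (hb : 0 < b) :
    negMulLog a + a * log b ≤ b - a := by
  rw [negMulLog_add_mul_log_eq hb.ne']
  calc b * negMulLog (a / b) ≤ b * (1 - a / b) :=
        mul_le_mul_of_nonneg_left (negMulLog_le_one_sub_self (by positivity)) hb.le
    _ = b - a := by field_simp

lemma negMulLog_add_mul_log_lt {a b : ℝ} (ha : 0 ≤ a) (hb : 0 < b) (hab : a ≠ b) :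
    negMulLog a + a * log b < b - a := by
  rw [negMulLog_add_mul_log_eq hb.ne']
  calc b * negMulLog (a / b) < b * (1 - a / b) :=
        mul_lt_mul_of_pos_left (negMulLog_lt_one_sub_self (by positivity)
          (by rwa [ne_eq, div_eq_one_iff_eq hb.ne'])) hb
    _ = b - a := by field_simp

end Real

section FiniteDistribution

variable {ι : Type*} [Fintype ι]

/-- The equality case of Gibbs' inequality. -/
lemma eq_of_sum_negMulLog_add_mul_log_nonneg {a b : ι → ℝ} (ha : ∀ i, 0 ≤ a i)
    (hb : ∀ i, 0 ≤ b i)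
    (hba : ∀ i, b i = 0 → a i = 0) (hsum : ∑ i, b i ≤ ∑ i, a i)
    (h : 0 ≤ ∑ i, (negMulLog (a i) + a i * log (b i))) : a = b := by
  by_contra hne
  obtain ⟨i, hi⟩ := Function.ne_iff.1 hne
  have hbi : 0 < b i := (hb i).lt_of_ne fun h0 => hi (by rw [← h0, hba i h0.symm])
  have hlt : ∑ i, (negMulLog (a i) + a i * log (b i)) < ∑ i, (b i - a i) := by
    refine sum_lt_sum (fun j _ => ?_) ⟨i, mem_univ i, negMulLog_add_mul_log_lt (ha i) hbi hi⟩
    rcases (hb j).eq_or_lt with h0 | h0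
    · simp [← h0, hba j h0.symm]
    · exact negMulLog_add_mul_log_le (ha j) h0
  rw [sum_sub_distrib] at hlt
  linarith

lemma card_support_pos {r : ι → ℝ} (hr1 : ∑ i, r i = 1) : 0 < #{i | r i ≠ 0} :=
  card_pos.2 (nonempty_of_sum_ne_zero (by rw [sum_filter_ne_zero, hr1]; exact one_ne_zero))

lemma sum_negMulLog_le_log_card_support {r : ι → ℝ} (hr : ∀ i, 0 ≤ r i) (hr1 : ∑ i, r i = 1) :
    ∑ i, negMulLog (r i) ≤ log #{i | r i ≠ 0} := by
  set R : Finset ι := {i | r i ≠ 0}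
  have hR : ∑ i ∈ R, r i = 1 := by rw [sum_filter_ne_zero, hr1]
  have hm : (0 : ℝ) < #R := by exact_mod_cast card_support_pos hr1
  have hgibbs : ∑ i ∈ R, (negMulLog (r i) + r i * log (#R : ℝ)⁻¹) ≤ ∑ i ∈ R, ((#R : ℝ)⁻¹ - r i) :=
    sum_le_sum fun i _ => negMulLog_add_mul_log_le (hr i) (inv_pos.2 hm)
  rw [sum_add_distrib, ← sum_mul, hR, sum_sub_distrib, sum_const, hR, log_inv, nsmul_eq_mul,
    mul_inv_cancel₀ hm.ne'] at hgibbs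
  rw [← sum_filter_of_ne (p := fun i => r i ≠ 0) fun i _ h h0 => h (by rw [h0, negMulLog_zero])]
  linarith

lemma eq_zero_of_apply_eq_one {r : ι → ℝ} (hr : ∀ i, 0 ≤ r i) (hr1 : ∑ i, r i = 1) {i j : ι}
    (hi : r i = 1) (hji : j ≠ i) : r j = 0 := by
  classical
  have h := sum_le_sum_of_subset_of_nonneg (subset_univ {i, j}) fun k _ _ => hr k
  rw [sum_pair hji.symm, hi, hr1] at h
  linarith [hr j]

lemma sum_negMulLog_eq_negMulLog_sum_add {q : ι → ℝ} (hq : ∀ i, 0 ≤ q i) :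
    ∑ i, negMulLog (q i) = negMulLog (∑ i, q i) + (∑ i, q i) * ∑ i, negMulLog (q i / ∑ j, q j) := by
  rcases eq_or_ne (∑ i, q i) 0 with hP | hP
  · have hq0 : q = 0 := (Fintype.sum_eq_zero_iff_of_nonneg hq).1 hP
    simp [hq0]
  calc ∑ i, negMulLog (q i) = ∑ i, negMulLog ((∑ j, q j) * (q i / ∑ j, q j)) := by
        simp only [mul_div_cancel₀ _ hP]
    _ = _ := by
        simp only [negMulLog_mul, sum_add_distrib, ← sum_mul, ← mul_sum, ← sum_div,
          div_self hP, one_mul]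

lemma card_support_le_one_of_apply_eq_one {r : ι → ℝ} (hr : ∀ i, 0 ≤ r i)
    (hr1 : ∑ i, r i = 1) {i : ι} (hi : r i = 1) : #{j | r j ≠ 0} ≤ 1 :=
  card_le_one.2 fun j hj k hk => by
    simp only [mem_filter, mem_univ, true_and] at hj hk
    rw [not_imp_comm.1 (eq_zero_of_apply_eq_one hr hr1 hi) hj,
      not_imp_comm.1 (eq_zero_of_apply_eq_one hr hr1 hi) hk]

lemma log_add_log_le_log_two {m n : ℕ} (hm : 0 < m) (hn : 0 < n) (hmn : m + n ≤ 3) :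
    log m + log n ≤ log 2 := by
  have hprod : m * n ≤ 2 := by
    obtain ⟨hm2, hn2⟩ : m ≤ 2 ∧ n ≤ 2 := by omega
    interval_cases m <;> interval_cases n <;> omega
  rw [← log_mul (by positivity) (by positivity)]
  exact log_le_log (by positivity) (by exact_mod_cast hprod)

lemma sum_negMulLog_add_sum_negMulLog_le {A : Type*} [Fintype A] (hA : Fintype.card A ≤ 3)
    {r s : A → ℝ} (hr : ∀ a, 0 ≤ r a) (hs : ∀ a, 0 ≤ s a) (hr1 : ∑ a, r a = 1) (hs1 : ∑ a, s a = 1)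
    (hrs : ∀ a, r a * s a = 0 ∨ r a * s a = r a) (hsr : ∀ a, r a * s a = 0 ∨ r a * s a = s a) :
    ∑ a, negMulLog (r a) + ∑ a, negMulLog (s a) ≤ log 2 * (1 - ∑ a, r a * s a) := by
  classical
  have hHr := sum_negMulLog_le_log_card_support hr hr1
  have hHs := sum_negMulLog_le_log_card_support hs hs1
  by_cases h : ∃ a, r a * s a ≠ 0
  · obtain ⟨a, ha⟩ := h
    have hra : r a = 1 := (mul_eq_right₀ (right_ne_zero_of_mul ha)).1 ((hsr a).resolve_left ha)
    have hsa : s a = 1 := (mul_eq_left₀ (left_ne_zero_of_mul ha)).1 ((hrs a).resolve_left ha)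
    have hrs1 : ∑ b, r b * s b = 1 := by
      rw [Fintype.sum_eq_single a fun b hb => by rw [eq_zero_of_apply_eq_one hr hr1 hra hb,
        zero_mul], hra, hsa, one_mul]
    have hlogr : log #{b | r b ≠ 0} ≤ 0 := log_nonpos (Nat.cast_nonneg _)
      (by exact_mod_cast card_support_le_one_of_apply_eq_one hr hr1 hra)
    have hlogs : log #{b | s b ≠ 0} ≤ 0 := log_nonpos (Nat.cast_nonneg _)
      (by exact_mod_cast card_support_le_one_of_apply_eq_one hs hs1 hsa)
    rw [hrs1, sub_self, mul_zero]
    linarith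
  · push Not at h
    have hdisj : Disjoint (α := Finset A) {a | r a ≠ 0} {a | s a ≠ 0} :=
      disjoint_filter.2 fun a _ ha hb => mul_ne_zero ha hb (h a)
    have hlog := log_add_log_le_log_two (card_support_pos hr1) (card_support_pos hs1)
      ((card_union_of_disjoint hdisj).symm.trans_le ((card_le_univ _).trans hA))
    rw [Fintype.sum_eq_zero _ h, sub_zero, mul_one]
    linarith

end FiniteDistribution

section Measure

variable {Ω S S' T : Type*} [MeasurableSpace Ω] {μ : Measure Ω}

lemma pm_nonneg (X : Ω → S) (x : S) : 0 ≤ pm μ X x := ENNReal.toReal_nonneg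

lemma pm_congr {X : Ω → S} {Y : Ω → S'} {x : S} {y : S'} (h : ∀ ω, X ω = x ↔ Y ω = y) :
    pm μ X x = pm μ Y y := by
  unfold pm
  congr 2
  ext ω
  exact h ω

lemma pm_le_pm [IsFiniteMeasure μ] {X : Ω → S} {Y : Ω → S'} {x : S} {y : S'}
    (h : ∀ ω, X ω = x → Y ω = y) : pm μ X x ≤ pm μ Y y :=
  ENNReal.toReal_mono (measure_ne_top _ _) (measure_mono h)

lemma pm_eq_zero_of_imp [IsFiniteMeasure μ] {X : Ω → S} {Y : Ω → S'} {x : S} {y : S'}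
    (h : ∀ ω, X ω = x → Y ω = y) (hy : pm μ Y y = 0) : pm μ X x = 0 :=
  le_antisymm (hy ▸ pm_le_pm h) (pm_nonneg _ _)

lemma pm_prodMk (X : Ω → S) (Y : Ω → S') (x : S) (y : S') :
    pm μ (fun ω => (X ω, Y ω)) (x, y) = (μ (X ⁻¹' {x} ∩ Y ⁻¹' {y})).toReal := by
  rw [pm, ← Set.singleton_prod_singleton, Set.mk_preimage_prod]

lemma pm_prodMk_comm (X : Ω → S) (Y : Ω → S') (x : S) (y : S') :
    pm μ (fun ω => (Y ω, X ω)) (y, x) = pm μ (fun ω => (X ω, Y ω)) (x, y) :=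
  pm_congr fun ω => by simp only [Prod.mk.injEq, and_comm]

lemma pm_prodMk_of_indepFun [MeasurableSpace S] [MeasurableSingletonClass S] [MeasurableSpace S']
    [MeasurableSingletonClass S'] {X : Ω → S} {Y : Ω → S'} (h : IndepFun X Y μ) (x : S) (y : S') :
    pm μ (fun ω => (X ω, Y ω)) (x, y) = pm μ X x * pm μ Y y := by
  rw [pm_prodMk, h.measure_inter_preimage_eq_mul _ _ (measurableSet_singleton x)
    (measurableSet_singleton y), ENNReal.toReal_mul]
  rfl

variable [Fintype T] [MeasurableSpace T] [MeasurableSingletonClass T]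

lemma sum_pm_eq_one [IsProbabilityMeasure μ] {X : Ω → T} (hX : Measurable X) :
    ∑ x, pm μ X x = 1 := by
  unfold pm
  rw [← ENNReal.toReal_sum fun _ _ => measure_ne_top _ _,
    sum_measure_preimage_singleton _ fun x _ => hX (measurableSet_singleton x)]
  simp

lemma sum_pm_prodMk_right [IsFiniteMeasure μ] (X : Ω → S) {Y : Ω → T} (hY : Measurable Y)
    (x : S) : ∑ y, pm μ (fun ω => (X ω, Y ω)) (x, y) = pm μ X x := by
  have hrestrict : ∀ y, μ (X ⁻¹' {x} ∩ Y ⁻¹' {y}) = μ.restrict (X ⁻¹' {x}) (Y ⁻¹' {y}) :=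
    fun y => by rw [Measure.restrict_apply (hY (measurableSet_singleton y)), Set.inter_comm]
  simp only [pm_prodMk, hrestrict]
  rw [← ENNReal.toReal_sum fun _ _ => measure_ne_top _ _,
    sum_measure_preimage_singleton _ fun y _ => hY (measurableSet_singleton y)]
  simp [pm]

lemma sum_pm_prodMk_left [IsFiniteMeasure μ] {X : Ω → T} (hX : Measurable X) (Y : Ω → S)
    (y : S) : ∑ x, pm μ (fun ω => (X ω, Y ω)) (x, y) = pm μ Y y := by
  rw [← sum_pm_prodMk_right Y hX y]
  exact sum_congr rfl fun x _ => (pm_prodMk_comm X Y x y).symm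

lemma pm_comp_eq_sum [IsFiniteMeasure μ] {V : Type*} [Fintype V] [MeasurableSpace V]
    [MeasurableSingletonClass V] [DecidableEq S] {W : Ω → V} (hW : Measurable W) (g : V → S)
    (s : S) :
    pm μ (g ∘ W) s = ∑ v with g v = s, pm μ W v := by
  unfold pm
  rw [← ENNReal.toReal_sum fun _ _ => measure_ne_top _ _,
    sum_measure_preimage_singleton _ fun v _ => hW (measurableSet_singleton v)]
  congr 2
  ext ω
  simp

/-- The law of the unconscious statistician for `pm`. -/
lemma sum_pm_mul_comp [IsFiniteMeasure μ] {V : Type*} [Fintype V] [MeasurableSpace V]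
    [MeasurableSingletonClass V] [Fintype S] {W : Ω → V} (hW : Measurable W) (g : V → S)
    (f : S → ℝ) :
    ∑ v, pm μ W v * f (g v) = ∑ s, pm μ (g ∘ W) s * f s := by
  classical
  simp only [pm_comp_eq_sum hW, sum_mul]
  rw [← sum_fiberwise univ g fun v => pm μ W v * f (g v)]
  exact sum_congr rfl fun s _ => sum_congr rfl fun v hv => by rw [(mem_filter.1 hv).2]

end Measure

section Entropy

variable {Ω S S' T : Type*} [MeasurableSpace Ω] {μ : Measure Ω}

lemma entH_eq_of_injective [Fintype S] [Fintype S'] {X : Ω → S} {Y : Ω → S'} {f : S → S'}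
    (hf : f.Injective) (hY : ∀ ω, Y ω = f (X ω)) : entH μ Y = entH μ X := by
  obtain rfl : Y = f ∘ X := funext hY
  refine (Fintype.sum_of_injective f hf _ _ (fun s' hs' => ?_) fun s => ?_).symm
  · have hempty : (f ∘ X) ⁻¹' {s'} = ∅ :=
      Set.eq_empty_of_forall_notMem fun ω h => hs' ⟨X ω, h⟩
    simp [pm, hempty]
  · exact congrArg negMulLog (pm_congr fun ω => hf.eq_iff.symm)

lemma entH_eq_log_card [Fintype S] {X : Ω → S}
    (h : ∀ s, pm μ X s = (Fintype.card S : ℝ)⁻¹) : entH μ X = log (Fintype.card S) := by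
  rcases Nat.eq_zero_or_pos (Fintype.card S) with h0 | h0
  · simp [entH, Fintype.card_eq_zero_iff.1 h0]
  · simp only [entH, h, sum_const, card_univ, nsmul_eq_mul, negMulLog, log_inv]
    field_simp

lemma sum_pm_mul_log_pm_comp [IsFiniteMeasure μ] [Fintype S] {V : Type*} [Fintype V]
    [MeasurableSpace V] [MeasurableSingletonClass V] {W : Ω → V} (hW : Measurable W)
    (g : V → S) : ∑ v, pm μ W v * log (pm μ (g ∘ W) (g v)) = -entH μ (g ∘ W) := by
  rw [sum_pm_mul_comp hW g fun s => log (pm μ (g ∘ W) s), entH, ← sum_neg_distrib]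
  simp only [negMulLog, neg_mul, neg_neg]

/-- `condPm μ X Y x y` is the conditional probability `P(X = x | Y = y)`; it is `0` when
`P(Y = y) = 0`. -/
noncomputable def condPm (μ : Measure Ω) (X : Ω → S) (Y : Ω → T) (x : S) (y : T) : ℝ :=
  pm μ (fun ω => (X ω, Y ω)) (x, y) / pm μ Y y

lemma condPm_nonneg (X : Ω → S) (Y : Ω → T) (x : S) (y : T) : 0 ≤ condPm μ X Y x y :=
  div_nonneg (pm_nonneg _ _) (pm_nonneg _ _)

lemma condPm_le_one [IsFiniteMeasure μ] (X : Ω → S) (Y : Ω → T) (x : S) (y : T) :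
    condPm μ X Y x y ≤ 1 :=
  div_le_one_of_le₀ (pm_le_pm fun _ h => congrArg Prod.snd h) (pm_nonneg _ _)

lemma pm_mul_condPm [IsFiniteMeasure μ] (X : Ω → S) (Y : Ω → T) (x : S) (y : T) :
    pm μ Y y * condPm μ X Y x y = pm μ (fun ω => (X ω, Y ω)) (x, y) := by
  rcases eq_or_ne (pm μ Y y) 0 with h | h
  · rw [h, zero_mul]
    exact le_antisymm (h ▸ pm_le_pm fun _ h => congrArg Prod.snd h) (pm_nonneg _ _) |>.symm
  · exact mul_div_cancel₀ _ h

variable [Fintype S] [MeasurableSpace S] [MeasurableSingletonClass S]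

lemma sum_condPm [IsFiniteMeasure μ] {X : Ω → S} (hX : Measurable X) {Y : Ω → T} {y : T}
    (hy : pm μ Y y ≠ 0) : ∑ x, condPm μ X Y x y = 1 := by
  simp only [condPm]
  rw [← sum_div, sum_pm_prodMk_left hX Y y, div_self hy]

lemma condEnt_eq_sum_pm_mul [IsFiniteMeasure μ] [Fintype T] {X : Ω → S} (hX : Measurable X)
    (Y : Ω → T) : condEnt μ X Y = ∑ y, pm μ Y y * ∑ x, negMulLog (condPm μ X Y x y) := by
  rw [condEnt, entH, entH, Fintype.sum_prod_type_right, ← sum_sub_distrib]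
  refine sum_congr rfl fun y _ => ?_
  rw [sum_negMulLog_eq_negMulLog_sum_add (q := fun x => pm μ (fun ω => (X ω, Y ω)) (x, y))
    fun x => pm_nonneg _ _, sum_pm_prodMk_left hX Y y]
  simp only [condPm, add_sub_cancel_left]

lemma pm_prodMk_eq_zero_or_eq_of_condEnt_eq_zero [IsFiniteMeasure μ] [Fintype T] {Z : Ω → S}
    (hZ : Measurable Z) {V : Ω → T} (h : condEnt μ Z V = 0) (z : S) (v : T) :
    pm μ (fun ω => (Z ω, V ω)) (z, v) = 0 ∨ pm μ (fun ω => (Z ω, V ω)) (z, v) = pm μ V v := by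
  have hent : ∀ v z, 0 ≤ negMulLog (condPm μ Z V z v) := fun v z =>
    negMulLog_nonneg (condPm_nonneg _ _ _ _) (condPm_le_one _ _ _ _)
  rw [condEnt_eq_sum_pm_mul hZ] at h
  have hv := (sum_eq_zero_iff_of_nonneg fun v _ =>
    mul_nonneg (pm_nonneg _ _) (Fintype.sum_nonneg (hent v))).1 h v (mem_univ v)
  rw [← pm_mul_condPm]
  rcases mul_eq_zero.1 hv with hP | hH
  · simp [hP]
  have hc := (sum_eq_zero_iff_of_nonneg fun z _ => hent v z).1 hH z (mem_univ z)
  rw [negMulLog, neg_mul, neg_eq_zero] at hc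
  rcases mul_eq_zero.1 hc with h0 | h0
  · simp [h0]
  rcases log_eq_zero.1 h0 with h0 | h1 | hneg
  · simp [h0]
  · simp [h1]
  · linarith [condPm_nonneg (μ := μ) Z V z v]

end Entropy

section CondIndep

variable {Ω S S' T : Type*} [MeasurableSpace Ω] {μ : Measure Ω} [IsFiniteMeasure μ]
  [Fintype S] [MeasurableSpace S] [MeasurableSingletonClass S]
  [Fintype S'] [MeasurableSpace S'] [MeasurableSingletonClass S'] [Fintype T]
  {X : Ω → S} {Y : Ω → S'} {M : Ω → T}

lemma sum_pm_mul_pm_div_pm_eq (hX : Measurable X) (hY : Measurable Y) :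
    ∑ v : (S × S') × T, pm μ (fun ω => (X ω, M ω)) (v.1.1, v.2) *
      pm μ (fun ω => (Y ω, M ω)) (v.1.2, v.2) / pm μ M v.2 =
    ∑ v, pm μ (fun ω => ((X ω, Y ω), M ω)) v := by
  rw [Fintype.sum_prod_type_right (f := pm μ fun ω => ((X ω, Y ω), M ω)),
    Fintype.sum_prod_type_right]
  simp only [sum_pm_prodMk_left (hX.prodMk hY) M]
  refine sum_congr rfl fun t _ => ?_
  rw [Fintype.sum_prod_type]
  simp only [← sum_div, ← sum_mul_sum, sum_pm_prodMk_left hX M t, sum_pm_prodMk_left hY M t,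
    mul_self_div_self]

variable [MeasurableSpace T] [MeasurableSingletonClass T]

lemma sum_negMulLog_add_mul_log_eq_neg_condMutInf (hX : Measurable X) (hY : Measurable Y)
    (hM : Measurable M) :
    ∑ v : (S × S') × T, (negMulLog (pm μ (fun ω => ((X ω, Y ω), M ω)) v) +
      pm μ (fun ω => ((X ω, Y ω), M ω)) v * log (pm μ (fun ω => (X ω, M ω)) (v.1.1, v.2) *
        pm μ (fun ω => (Y ω, M ω)) (v.1.2, v.2) / pm μ M v.2)) = -condMutInf μ X Y M := by
  set W := fun ω => ((X ω, Y ω), M ω)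
  have hW : Measurable W := (hX.prodMk hY).prodMk hM
  have hlog : ∀ v : (S × S') × T, pm μ W v * log (pm μ (fun ω => (X ω, M ω)) (v.1.1, v.2) *
        pm μ (fun ω => (Y ω, M ω)) (v.1.2, v.2) / pm μ M v.2) =
      pm μ W v * log (pm μ (fun ω => (X ω, M ω)) (v.1.1, v.2)) +
        pm μ W v * log (pm μ (fun ω => (Y ω, M ω)) (v.1.2, v.2)) -
        pm μ W v * log (pm μ M v.2) := by
    intro v
    rcases (pm_nonneg (μ := μ) W v).eq_or_lt with h0 | hpos
    · simp [← h0]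
    have hXM := hpos.trans_le (pm_le_pm (y := (v.1.1, v.2)) fun ω h => by rw [← h])
    have hYM := hpos.trans_le (pm_le_pm (y := (v.1.2, v.2)) fun ω h => by rw [← h])
    have hMt := hpos.trans_le (pm_le_pm (Y := M) (y := v.2) fun ω h => by rw [← h])
    rw [log_div (by positivity) hMt.ne', log_mul hXM.ne' hYM.ne']
    ring
  simp only [hlog, sum_add_distrib, sum_sub_distrib]
  have hXM : ∑ v, pm μ W v * log (pm μ (fun ω => (X ω, M ω)) (v.1.1, v.2)) =
      -entH μ (fun ω => (X ω, M ω)) := sum_pm_mul_log_pm_comp hW fun v => (v.1.1, v.2)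
  have hYM : ∑ v, pm μ W v * log (pm μ (fun ω => (Y ω, M ω)) (v.1.2, v.2)) =
      -entH μ (fun ω => (Y ω, M ω)) := sum_pm_mul_log_pm_comp hW fun v => (v.1.2, v.2)
  have hM : ∑ v, pm μ W v * log (pm μ M v.2) = -entH μ M := sum_pm_mul_log_pm_comp hW Prod.snd
  rw [hXM, hYM, hM, condMutInf]
  change entH μ W + _ = _
  ring

/-- Equality in Gibbs' inequality between the law of `((X, Y), M)` and the law under which `X` and
`Y` are conditionally independent given `M`: their relative entropy is `I(X;Y|M)`. -/
lemma pm_eq_mul_div_of_condMutInf_eq_zero (hX : Measurable X) (hY : Measurable Y)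
    (hM : Measurable M) (h : condMutInf μ X Y M = 0) (x : S) (y : S') (t : T) :
    pm μ (fun ω => ((X ω, Y ω), M ω)) ((x, y), t) =
      pm μ (fun ω => (X ω, M ω)) (x, t) * pm μ (fun ω => (Y ω, M ω)) (y, t) / pm μ M t := by
  refine congrFun (eq_of_sum_negMulLog_add_mul_log_nonneg (fun _ => pm_nonneg _ _)
    (fun _ => div_nonneg (mul_nonneg (pm_nonneg _ _) (pm_nonneg _ _)) (pm_nonneg _ _))
    (fun v hv => ?_) (sum_pm_mul_pm_div_pm_eq hX hY).le
    (by rw [sum_negMulLog_add_mul_log_eq_neg_condMutInf hX hY hM, h, neg_zero])) ((x, y), t)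
  rcases div_eq_zero_iff.1 hv with hv | hv
  · rcases mul_eq_zero.1 hv with hv | hv
    · exact pm_eq_zero_of_imp (fun ω h => by rw [← h]) hv
    · exact pm_eq_zero_of_imp (fun ω h => by rw [← h]) hv
  · exact pm_eq_zero_of_imp (fun ω h => by rw [← h]) hv

end CondIndep

section EQ

variable {Ω S S' T : Type*} [MeasurableSpace Ω] {μ : Measure Ω}

lemma condMutInf_add_condMutInf_eq [Fintype S] [Fintype S'] [Fintype T] (X : Ω → S)
    (Y : Ω → S') (M : Ω → T) :
    condMutInf μ X M Y + condMutInf μ Y M X =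
      2 * entH μ (fun ω => (X ω, Y ω)) - entH μ X - entH μ Y -
        (condEnt μ X M + condEnt μ Y M) + 2 * condMutInf μ X Y M := by
  have hYX : entH μ (fun ω => (Y ω, X ω)) = entH μ (fun ω => (X ω, Y ω)) :=
    entH_eq_of_injective Prod.swap_injective fun _ => rfl
  have hMX : entH μ (fun ω => (M ω, X ω)) = entH μ (fun ω => (X ω, M ω)) :=
    entH_eq_of_injective Prod.swap_injective fun _ => rfl
  have hMY : entH μ (fun ω => (M ω, Y ω)) = entH μ (fun ω => (Y ω, M ω)) :=
    entH_eq_of_injective Prod.swap_injective fun _ => rfl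
  have hXMY : entH μ (fun ω => ((X ω, M ω), Y ω)) = entH μ (fun ω => ((X ω, Y ω), M ω)) :=
    entH_eq_of_injective (f := fun p : (S × S') × T => ((p.1.1, p.2), p.1.2))
      (by rintro ⟨⟨a, b⟩, c⟩ ⟨⟨a', b'⟩, c'⟩ h; simp only [Prod.mk.injEq] at h ⊢; tauto)
      fun _ => rfl
  have hYMX : entH μ (fun ω => ((Y ω, M ω), X ω)) = entH μ (fun ω => ((X ω, Y ω), M ω)) :=
    entH_eq_of_injective (f := fun p : (S × S') × T => ((p.1.2, p.2), p.1.1))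
      (by rintro ⟨⟨a, b⟩, c⟩ ⟨⟨a', b'⟩, c'⟩ h; simp only [Prod.mk.injEq] at h ⊢; tauto)
      fun _ => rfl
  simp only [condMutInf, condEnt, hYX, hMX, hMY, hXMY, hYMX]
  ring

variable [IsFiniteMeasure μ] {A : Type*} [Fintype A] [MeasurableSpace A]
  [MeasurableSingletonClass A] {X Y : Ω → A} {M : Ω → T}

lemma pm_mul_sum_negMulLog_add_le (hA : Fintype.card A ≤ 3) (hX : Measurable X)
    (hY : Measurable Y) (t : T)
    (hfac : ∀ x, pm μ (fun ω => ((X ω, Y ω), M ω)) ((x, x), t) =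
      pm μ (fun ω => (X ω, M ω)) (x, t) * pm μ (fun ω => (Y ω, M ω)) (x, t) / pm μ M t)
    (hdetX : ∀ x, pm μ (fun ω => ((X ω, Y ω), M ω)) ((x, x), t) = 0 ∨
      pm μ (fun ω => ((X ω, Y ω), M ω)) ((x, x), t) = pm μ (fun ω => (X ω, M ω)) (x, t))
    (hdetY : ∀ x, pm μ (fun ω => ((X ω, Y ω), M ω)) ((x, x), t) = 0 ∨
      pm μ (fun ω => ((X ω, Y ω), M ω)) ((x, x), t) = pm μ (fun ω => (Y ω, M ω)) (x, t)) :
    pm μ M t * (∑ x, negMulLog (condPm μ X M x t) + ∑ x, negMulLog (condPm μ Y M x t)) ≤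
      log 2 * (pm μ M t - ∑ x, pm μ (fun ω => ((X ω, Y ω), M ω)) ((x, x), t)) := by
  rcases eq_or_ne (pm μ M t) 0 with hP | hP
  · have hdiag : ∀ x, pm μ (fun ω => ((X ω, Y ω), M ω)) ((x, x), t) = 0 := fun x =>
      pm_eq_zero_of_imp (fun _ h => congrArg Prod.snd h) hP
    simp [hP, hdiag]
  have hW : ∀ x, pm μ (fun ω => ((X ω, Y ω), M ω)) ((x, x), t) =
      pm μ M t * (condPm μ X M x t * condPm μ Y M x t) := fun x => by
    rw [hfac, ← pm_mul_condPm X M, ← pm_mul_condPm Y M]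
    field_simp
  have hrs : ∀ x, condPm μ X M x t * condPm μ Y M x t = 0 ∨
      condPm μ X M x t * condPm μ Y M x t = condPm μ X M x t := fun x => by
    simpa [hW, ← pm_mul_condPm X M x t, hP] using hdetX x
  have hsr : ∀ x, condPm μ X M x t * condPm μ Y M x t = 0 ∨
      condPm μ X M x t * condPm μ Y M x t = condPm μ Y M x t := fun x => by
    simpa [hW, ← pm_mul_condPm Y M x t, hP] using hdetY x
  calc _ ≤ pm μ M t * (log 2 * (1 - ∑ x, condPm μ X M x t * condPm μ Y M x t)) :=
        mul_le_mul_of_nonneg_left (sum_negMulLog_add_sum_negMulLog_le hA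
          (fun _ => condPm_nonneg _ _ _ _) (fun _ => condPm_nonneg _ _ _ _) (sum_condPm hX hP)
          (sum_condPm hY hP) hrs hsr) (pm_nonneg _ _)
    _ = _ := by simp only [hW, ← mul_sum]; ring

end EQ

section Protocol

variable {Ω T : Type*} [MeasurableSpace Ω] {μ : Measure Ω}
  [Fintype T] [MeasurableSpace T] [MeasurableSingletonClass T]
  {A : Type*} [Fintype A] [MeasurableSpace A] [MeasurableSingletonClass A] {X Y : Ω → A}
  {M : Ω → T}

lemma condEnt_add_condEnt_le_log_two_mul [IsProbabilityMeasure μ] (hA : Fintype.card A ≤ 3)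
    (hX : Measurable X) (hY : Measurable Y) (hM : Measurable M) {U : Type*} [Fintype U]
    [MeasurableSpace U] [MeasurableSingletonClass U] {Z : Ω → U} (hZ : Measurable Z) {z : U}
    (hZXY : ∀ ω, Z ω = z ↔ X ω = Y ω) (hXY : condMutInf μ X Y M = 0)
    (hZX : condEnt μ Z (fun ω => (M ω, X ω)) = 0) (hZY : condEnt μ Z (fun ω => (M ω, Y ω)) = 0) :
    condEnt μ X M + condEnt μ Y M ≤ log 2 * (1 - ∑ x, pm μ (fun ω => (X ω, Y ω)) (x, x)) := by
  have hdiagX : ∀ ω x t, (Z ω, M ω, X ω) = (z, t, x) ↔ ((X ω, Y ω), M ω) = ((x, x), t) := by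
    intro ω x t
    simp only [Prod.mk.injEq, hZXY]
    grind
  have hdiagY : ∀ ω x t, (Z ω, M ω, Y ω) = (z, t, x) ↔ ((X ω, Y ω), M ω) = ((x, x), t) := by
    intro ω x t
    simp only [Prod.mk.injEq, hZXY]
    grind
  have hsum : 1 - ∑ x, pm μ (fun ω => (X ω, Y ω)) (x, x) =
      ∑ t, (pm μ M t - ∑ x, pm μ (fun ω => ((X ω, Y ω), M ω)) ((x, x), t)) := by
    rw [sum_sub_distrib, sum_pm_eq_one hM, sum_comm]
    simp only [sum_pm_prodMk_right _ hM]
  rw [condEnt_eq_sum_pm_mul hX, condEnt_eq_sum_pm_mul hY, ← sum_add_distrib, hsum, mul_sum]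
  refine sum_le_sum fun t _ => ?_
  rw [← mul_add]
  refine pm_mul_sum_negMulLog_add_le hA hX hY t
    (fun x => pm_eq_mul_div_of_condMutInf_eq_zero hX hY hM hXY x x t) (fun x => ?_) (fun x => ?_)
  · have h := pm_prodMk_eq_zero_or_eq_of_condEnt_eq_zero hZ hZX z (t, x)
    rwa [pm_congr (hdiagX · x t), pm_prodMk_comm X M x t] at h
  · have h := pm_prodMk_eq_zero_or_eq_of_condEnt_eq_zero hZ hZY z (t, x)
    rwa [pm_congr (hdiagY · x t), pm_prodMk_comm Y M x t] at h

end Protocol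

/-- Ternary EQ lower bound: for any finite-valued `M` with `I(X ; Y | M) = 0`,
`H(Z | (M,X)) = 0` and `H(Z | (M,Y)) = 0`, we have
`I(X ; M | Y) + I(Y ; M | X) ≥ 2 log 3 − (2/3) log 2`. -/
theorem ternary_EQ_information_cost_lower_bound
    {Ω : Type*} [MeasurableSpace Ω] (μ : Measure Ω) [IsProbabilityMeasure μ]
    {A : Type*} [Fintype A] [DecidableEq A]
    [MeasurableSpace A] [MeasurableSingletonClass A] (hA : Fintype.card A = 3)
    (X Y : Ω → A) (hX : Measurable X) (hY : Measurable Y)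
    (hindep : IndepFun X Y μ)
    (hXunif : ∀ a : A, μ (X ⁻¹' {a}) = (3 : ℝ≥0∞)⁻¹)
    (hYunif : ∀ a : A, μ (Y ⁻¹' {a}) = (3 : ℝ≥0∞)⁻¹)
    (Z : Ω → Fin 2) (hZ : Z = fun ω => if X ω = Y ω then 1 else 0)
    {T : Type*} [Fintype T] [MeasurableSpace T] [MeasurableSingletonClass T]
    (M : Ω → T) (hM : Measurable M)
    (hXY : condMutInf μ X Y M = 0)
    (hZX : condEnt μ Z (fun ω => (M ω, X ω)) = 0)
    (hZY : condEnt μ Z (fun ω => (M ω, Y ω)) = 0) :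
    condMutInf μ X M Y + condMutInf μ Y M X
      ≥ 2 * Real.log 3 - (2 / 3) * Real.log 2 := by
  have hZm : Measurable Z := hZ ▸ Measurable.ite (measurableSet_eq_fun hX hY) measurable_const
    measurable_const
  have hZXY : ∀ ω, Z ω = 1 ↔ X ω = Y ω := fun ω => by by_cases h : X ω = Y ω <;> simp [hZ, h]
  have hXu : ∀ a, pm μ X a = (Fintype.card A : ℝ)⁻¹ := fun a => by simp [pm, hXunif, hA]
  have hYu : ∀ a, pm μ Y a = (Fintype.card A : ℝ)⁻¹ := fun a => by simp [pm, hYunif, hA]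
  have hXYu : ∀ p : A × A, pm μ (fun ω => (X ω, Y ω)) p = (Fintype.card (A × A) : ℝ)⁻¹ :=
    fun p => by rw [pm_prodMk_of_indepFun hindep, hXu, hYu, Fintype.card_prod]; push_cast; ring
  have hdiag : ∑ x, pm μ (fun ω => (X ω, Y ω)) (x, x) = 1 / 3 := by norm_num [hXYu, hA]
  have hbound := condEnt_add_condEnt_le_log_two_mul hA.le hX hY hM hZm hZXY hXY hZX hZY
  rw [hdiag] at hbound
  have hlog9 : Real.log 9 = 2 * Real.log 3 := by
    rw [show (9 : ℝ) = 3 ^ 2 by norm_num, Real.log_pow]; norm_num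
  rw [condMutInf_add_condMutInf_eq, hXY, entH_eq_log_card hXYu, entH_eq_log_card hXu,
    entH_eq_log_card hYu, Fintype.card_prod, hA]
  push_cast
  rw [hlog9]
  linarith
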